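/- Fix an integer n ≥ 2 and let 𝓘 := {α ∈ ℤⁿ : α₁ + ⋯ + α_k + k − 1 ≥ 0 for every k = 1,…,n}. For every square-summable family (a_α)_{α∈𝓘} of complex numbers, the quantity ∑_{α∈𝓘} |a_α|² (1 − ∏_{k=1}^{n} r_k^{α₁+⋯+α_k})² tends to 0 as (r₁,…,rₙ) ∈ (0,1)ⁿ tends to (1,…,1). (Here r_k^{s} for s ∈ ℤ, possibly negative, is the usual integer power of the positive real r_k; note α₁+⋯+α_k ≥ 1−k for α ∈ 𝓘, so each summand is well defined and the sum is finite for each fixed r.) -/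
import Mathlib

open Filter Topology

/-- For a square-summable family `(a_α)` indexed by
`𝓘 = {α ∈ ℤⁿ : α₁ + ⋯ + α_k + k − 1 ≥ 0, k = 1,…,n}`, the quantity
`∑_{α ∈ 𝓘} |a_α|² (1 − ∏ₖ r_k^{α₁+⋯+α_k})²` tends to `0` as `r → (1,…,1)` within
`(0,1)ⁿ`. -/
theorem stmt2 (n : ℕ) (hn : 2 ≤ n)
    (a : {α : Fin n → ℤ // ∀ k : Fin n, 0 ≤ (∑ j ∈ Finset.Iic k, α j) + (k.val : ℤ)} → ℂ)
    (ha : Summable fun α => ‖a α‖ ^ 2) :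
    Tendsto
      (fun r : Fin n → ℝ =>
        ∑' α : {α : Fin n → ℤ // ∀ k : Fin n, 0 ≤ (∑ j ∈ Finset.Iic k, α j) + (k.val : ℤ)},
          ‖a α‖ ^ 2 * (1 - ∏ k : Fin n, r k ^ (∑ j ∈ Finset.Iic k, α.1 j)) ^ 2)
      (𝓝[Set.univ.pi fun _ : Fin n => Set.Ioo (0 : ℝ) 1] fun _ => 1) (𝓝 0) := by
  let I := {α : Fin n → ℤ // ∀ k : Fin n, 0 ≤ (∑ j ∈ Finset.Iic k, α j) + (k.val : ℤ)}
  set S : Set (Fin n → ℝ) := Set.univ.pi fun _ : Fin n => Set.Ioo (0 : ℝ) 1 with hS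
  set 𝓕 := 𝓝[S] (fun _ : Fin n => (1 : ℝ)) with h𝓕
  -- pointwise convergence
  have hrk : ∀ k : Fin n, Tendsto (fun r : Fin n → ℝ => r k) 𝓕 (𝓝 1) :=
    fun k => ((continuous_apply k).tendsto _).mono_left nhdsWithin_le_nhds
  have hptP : ∀ α : I, Tendsto
      (fun r : Fin n → ℝ => ∏ k : Fin n, r k ^ (∑ j ∈ Finset.Iic k, α.1 j)) 𝓕 (𝓝 1) := by
    intro α
    have : Tendsto (fun r : Fin n → ℝ => ∏ k : Fin n, r k ^ (∑ j ∈ Finset.Iic k, α.1 j)) 𝓕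
        (𝓝 (∏ k : Fin n, (1 : ℝ) ^ (∑ j ∈ Finset.Iic k, α.1 j))) := by
      refine tendsto_finset_prod _ fun k _ => ?_
      exact ((continuousAt_zpow₀ (1 : ℝ) _ (Or.inl one_ne_zero)).tendsto).comp (hrk k)
    simpa using this
  have hpt : ∀ α : I, Tendsto
      (fun r : Fin n → ℝ =>
        ‖a α‖ ^ 2 * (1 - ∏ k : Fin n, r k ^ (∑ j ∈ Finset.Iic k, α.1 j)) ^ 2) 𝓕 (𝓝 0) := by
    intro α
    have : Tendsto
        (fun r : Fin n → ℝ =>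
          ‖a α‖ ^ 2 * (1 - ∏ k : Fin n, r k ^ (∑ j ∈ Finset.Iic k, α.1 j)) ^ 2) 𝓕
        (𝓝 (‖a α‖ ^ 2 * (1 - 1) ^ 2)) :=
      tendsto_const_nhds.mul (((tendsto_const_nhds.sub (hptP α)).pow 2))
    simpa using this
  -- the dominating bound
  have hMcont : Tendsto (fun r : Fin n → ℝ => ∏ k : Fin n, r k ^ (-(k.val : ℤ))) 𝓕 (𝓝 1) := by
    have : Tendsto (fun r : Fin n → ℝ => ∏ k : Fin n, r k ^ (-(k.val : ℤ))) 𝓕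
        (𝓝 (∏ k : Fin n, (1 : ℝ) ^ (-(k.val : ℤ)))) := by
      refine tendsto_finset_prod _ fun k _ => ?_
      exact ((continuousAt_zpow₀ (1 : ℝ) _ (Or.inl one_ne_zero)).tendsto).comp (hrk k)
    simpa using this
  have hMev : ∀ᶠ r in 𝓕, (∏ k : Fin n, r k ^ (-(k.val : ℤ))) < 2 :=
    hMcont.eventually_lt_const (by norm_num)
  have hSev : ∀ᶠ r in 𝓕, r ∈ S := eventually_mem_nhdsWithin
  have h_bound : ∀ᶠ r in 𝓕, ∀ α : I,
      ‖‖a α‖ ^ 2 * (1 - ∏ k : Fin n, r k ^ (∑ j ∈ Finset.Iic k, α.1 j)) ^ 2‖ ≤ ‖a α‖ ^ 2 := by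
    filter_upwards [hMev, hSev] with r hM hr α
    have hrk' : ∀ k : Fin n, 0 < r k ∧ r k < 1 := fun k => hr k (Set.mem_univ k)
    set P := ∏ k : Fin n, r k ^ (∑ j ∈ Finset.Iic k, α.1 j) with hP
    have hPpos : 0 < P := Finset.prod_pos fun k _ => zpow_pos (hrk' k).1 _
    have hPle : P ≤ ∏ k : Fin n, r k ^ (-(k.val : ℤ)) := by
      refine Finset.prod_le_prod (fun k _ => (zpow_pos (hrk' k).1 _).le) fun k _ => ?_
      refine zpow_le_zpow_right_of_le_one₀ (hrk' k).1 (hrk' k).2.le ?_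
      have := α.2 k
      omega
    have hPlt : P < 2 := lt_of_le_of_lt hPle hM
    have habs : |1 - P| ≤ 1 := by
      rw [abs_le]; constructor <;> nlinarith
    have hsq : (1 - P) ^ 2 ≤ 1 := by
      have := sq_abs (1 - P) ▸ (pow_le_one₀ (abs_nonneg _) habs : |1 - P| ^ 2 ≤ 1)
      linarith [sq_abs (1 - P)]
    rw [Real.norm_eq_abs, abs_of_nonneg (by positivity)]
    nlinarith [norm_nonneg (a α), sq_nonneg (1 - P)]
  have := tendsto_tsum_of_dominated_convergence (g := fun _ : I => (0 : ℝ)) ha hpt h_bound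
  simpa using this
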